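/- arXiv:2404.06649 — 5 statements merged into one kernel-verified Lean document; each statement's English description precedes it below -/
import Mathlib

section
/- Geodesic equation solution for the qubit thermodynamic metric: the function ξ(t) = 2·arcsinh[tan(c₁(t + c₂)/2)] satisfies the Euler–Lagrange (geodesic) equation ξ̈ + Γ(ξ)·ξ̇² = 0 with Christoffel symbol Γ(ξ) = (1/(2m(ξ)))·m'(ξ) = −(1/2)tanh(ξ/2), where m(ξ) = e^ξ/(1+e^ξ)² (taking β = 1), for any real constants c₁, c₂ and t in an interval where tan(c₁(t+c₂)/2) is defined. -/
/-- The curve `ξ(t) = 2·arcsinh(tan(c₁(t+c₂)/2))` satisfies the geodesic equation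
`ξ̈ + Γ(ξ)·ξ̇² = 0` with Christoffel symbol `Γ(ξ) = −(1/2)·tanh(ξ/2)` of the qubit
thermodynamic metric `m(ξ) = e^ξ/(1+e^ξ)²` (at inverse temperature `β = 1`). -/
theorem stmt10 (c₁ c₂ : ℝ) (ξ : ℝ → ℝ)
    (hξ : ∀ t, ξ t = 2 * Real.arsinh (Real.tan (c₁ * (t + c₂) / 2)))
    (t : ℝ) (ht : Real.cos (c₁ * (t + c₂) / 2) ≠ 0) :
    deriv (deriv ξ) t + (-(1 / 2) * Real.tanh (ξ t / 2)) * (deriv ξ t) ^ 2 = 0 := by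
  set u : ℝ → ℝ := fun s => c₁ * (s + c₂) / 2 with hu_def
  have hu : ∀ s, HasDerivAt u (c₁ / 2) s := by
    intro s
    have h : HasDerivAt (fun s : ℝ => c₁ * (s + c₂) / 2) (c₁ * 1 / 2) s :=
      ((((hasDerivAt_id s).add_const c₂)).const_mul c₁).div_const 2
    simpa [hu_def] using h
  have hsq : ∀ s, Real.cos (u s) ≠ 0 →
      Real.sqrt (1 + Real.tan (u s) ^ 2) = |Real.cos (u s)|⁻¹ := by
    intro s hs
    have h1 : 1 + Real.tan (u s) ^ 2 = (Real.cos (u s) ^ 2)⁻¹ := by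
      have hpy := Real.sin_sq_add_cos_sq (u s)
      rw [Real.tan_eq_sin_div_cos, div_pow]
      field_simp
      linarith
    rw [h1, Real.sqrt_inv, Real.sqrt_sq_eq_abs]
  -- derivative of ξ at any point where cos (u s) ≠ 0
  have key : ∀ s, Real.cos (u s) ≠ 0 → HasDerivAt ξ (c₁ / |Real.cos (u s)|) s := by
    intro s hs
    have htan : HasDerivAt (fun s => Real.tan (u s)) (1 / Real.cos (u s) ^ 2 * (c₁ / 2)) s :=
      (Real.hasDerivAt_tan hs).comp s (hu s)
    have harsinh : HasDerivAt (fun s => Real.arsinh (Real.tan (u s)))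
        ((Real.sqrt (1 + Real.tan (u s) ^ 2))⁻¹ * (1 / Real.cos (u s) ^ 2 * (c₁ / 2))) s :=
      (Real.hasDerivAt_arsinh _).comp s htan
    have h2 : HasDerivAt (fun s => 2 * Real.arsinh (Real.tan (u s)))
        (2 * ((Real.sqrt (1 + Real.tan (u s) ^ 2))⁻¹ * (1 / Real.cos (u s) ^ 2 * (c₁ / 2)))) s :=
      harsinh.const_mul 2
    have hx : (fun s => 2 * Real.arsinh (Real.tan (u s))) = ξ := by
      funext x; rw [hξ x]
    rw [hx] at h2
    convert h2 using 1
    have habs : |Real.cos (u s)| ≠ 0 := abs_ne_zero.mpr hs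
    have hsa : Real.cos (u s) ^ 2 = |Real.cos (u s)| ^ 2 := (sq_abs _).symm
    rw [hsq s hs, inv_inv, hsa]
    field_simp
  -- sign of cos near t
  set c := Real.cos (u t) with hc_def
  set ε : ℝ := if 0 < c then 1 else -1 with hε_def
  have hεabs : |ε| = 1 := by
    rw [hε_def]; split <;> simp
  have hεc : 0 < ε * c := by
    rcases lt_or_gt_of_ne ht with h | h
    · have : ε = -1 := by rw [hε_def, if_neg (not_lt.mpr h.le)]
      rw [this]; nlinarith
    · have : ε = 1 := by rw [hε_def, if_pos h]
      rw [this]; nlinarith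
  have hcont : Continuous fun s => ε * Real.cos (u s) := by
    fun_prop
  have hev : ∀ᶠ s in nhds t, 0 < ε * Real.cos (u s) :=
    (hcont.continuousAt).eventually_const_lt hεc
  have habs_eq : ∀ s, 0 < ε * Real.cos (u s) → |Real.cos (u s)| = ε * Real.cos (u s) := by
    intro s hs
    have : |ε * Real.cos (u s)| = ε * Real.cos (u s) := abs_of_pos hs
    rwa [abs_mul, hεabs, one_mul] at this
  have evderiv : deriv ξ =ᶠ[nhds t] fun s => c₁ / (ε * Real.cos (u s)) := by
    filter_upwards [hev] with s hs
    have hcos : Real.cos (u s) ≠ 0 := by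
      intro h0; rw [h0] at hs; simp at hs
    rw [(key s hcos).deriv, habs_eq s hs]
  have hεc' : ε * c ≠ 0 := ne_of_gt hεc
  -- second derivative
  have hd2 : HasDerivAt (fun s => c₁ / (ε * Real.cos (u s)))
      ((0 * (ε * c) - c₁ * (ε * (-Real.sin (u t) * (c₁ / 2)))) / (ε * c) ^ 2) t := by
    exact (hasDerivAt_const t c₁).div (((hu t).cos).const_mul ε) hεc'
  have hderiv2 : deriv (deriv ξ) t
      = (0 * (ε * c) - c₁ * (ε * (-Real.sin (u t) * (c₁ / 2)))) / (ε * c) ^ 2 := by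
    rw [evderiv.deriv_eq, hd2.deriv]
  have hderiv1 : deriv ξ t = c₁ / (ε * c) := evderiv.self_of_nhds
  -- tanh term
  have htanh : Real.tanh (ξ t / 2) = ε * Real.sin (u t) := by
    rw [hξ t]
    have h2 : 2 * Real.arsinh (Real.tan (u t)) / 2 = Real.arsinh (Real.tan (u t)) := by ring
    rw [h2, Real.tanh_eq_sinh_div_cosh, Real.sinh_arsinh, Real.cosh_arsinh, hsq t ht,
      div_eq_mul_inv, inv_inv, Real.tan_eq_sin_div_cos, habs_eq t hεc]
    have hc' : Real.cos (u t) ≠ 0 := ht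
    field_simp
  rw [hderiv2, hderiv1, htanh]
  have hε2 : ε ^ 2 = 1 := by rw [hε_def]; split <;> norm_num
  have hcne : c ≠ 0 := ht
  have hεne : ε ≠ 0 := by rintro h; rw [h] at hε2; norm_num at hε2
  field_simp
  nlinarith [sq_nonneg c, hε2, sq_nonneg ε]
end

section
/- Cooling of a qubit by an equally spaced d-level machine: let the target qubit have thermal populations q₀ = 1/(1+e^{−β_S ω_S}), q₁ = 1−q₀, and the machine the thermal distribution p_n = e^{−βnω_M}(1−e^{−βω_M})/(1−e^{−βdω_M}) for n = 0,…,d−1. After the permutation exchanging |1,n⟩ ↔ |0,n+1⟩ for n = 0,…,d−2, the system's final ground population is q₀' = q₀p₀ + q₁·Σ_{n=0}^{d−2} p_n, and the resulting change Δq₀ = q₀' − q₀ = (e^{β(d−1)ω_M} − 1)(e^{βω_M} − e^{β_S ω_S}) / ((e^{βdω_M} − 1)(1 + e^{β_S ω_S})). In particular Δq₀ ≥ 0 if and only if βω_M ≥ β_S ω_S. -/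
/-- Cooling of a thermal qubit target by an equally spaced `d`-level thermal machine
via the permutation `|1,n⟩ ↔ |0,n+1⟩`: closed form of the ground-population change
`Δq₀` and the cooling condition `Δq₀ ≥ 0 ↔ βω_M ≥ β_S ω_S`. -/
theorem stmt14 (β βS ωS ωM : ℝ) (hβ : 0 < β) (hβS : 0 < βS) (hωS : 0 < ωS) (hωM : 0 < ωM)
    (d : ℕ) (hd : 2 ≤ d)
    (q0 q1 : ℝ) (hq0 : q0 = 1 / (1 + Real.exp (-βS * ωS))) (hq1 : q1 = 1 - q0)
    (p : ℕ → ℝ)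
    (hp : ∀ n, p n = Real.exp (-β * n * ωM) * (1 - Real.exp (-β * ωM))
      / (1 - Real.exp (-β * d * ωM)))
    (q0' : ℝ) (hq0' : q0' = q0 * p 0 + q1 * ∑ n ∈ Finset.range (d - 1), p n) :
    q0' - q0 = (Real.exp (β * (d - 1 : ℝ) * ωM) - 1) * (Real.exp (β * ωM) - Real.exp (βS * ωS))
      / ((Real.exp (β * d * ωM) - 1) * (1 + Real.exp (βS * ωS)))
    ∧ (0 ≤ q0' - q0 ↔ βS * ωS ≤ β * ωM) := by
  obtain ⟨m, rfl⟩ : ∃ m, d = m + 2 := ⟨d - 2, by omega⟩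
  set x := Real.exp (-β * ωM) with hx
  set y := Real.exp (-βS * ωS) with hy
  have hx0 : 0 < x := Real.exp_pos _
  have hx1 : x < 1 := by
    rw [hx]
    calc Real.exp (-β * ωM) < Real.exp 0 := Real.exp_lt_exp.mpr (by nlinarith)
    _ = 1 := Real.exp_zero
  have hy0 : 0 < y := Real.exp_pos _
  have hxd : x ^ (m + 2) < 1 := pow_lt_one₀ hx0.le hx1 (by omega)
  have hden0 : (0:ℝ) < 1 - x ^ (m + 2) := by linarith
  have hE : Real.exp (β * ωM) = x⁻¹ := by
    rw [hx, ← Real.exp_neg]; congr 1; ring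
  have hY : Real.exp (βS * ωS) = y⁻¹ := by
    rw [hy, ← Real.exp_neg]; congr 1; ring
  have hpow : ∀ n : ℕ, Real.exp (-β * (n:ℝ) * ωM) = x ^ n := by
    intro n
    rw [show -β * (n:ℝ) * ωM = (n:ℝ) * (-β * ωM) by ring, Real.exp_nat_mul]
  have hsum : ∑ n ∈ Finset.range (m + 2 - 1), p n
      = (x ^ (m + 1) - 1) / (x - 1) * ((1 - x) / (1 - x ^ (m + 2))) := by
    have hpn : ∀ n : ℕ, p n = x ^ n * ((1 - x) / (1 - x ^ (m + 2))) := by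
      intro n
      rw [hp, hpow]
      rw [show -β * ((m+2:ℕ):ℝ) * ωM = ((m+2:ℕ):ℝ) * (-β * ωM) by push_cast; ring,
        Real.exp_nat_mul]
      ring
    simp only [hpn, ← Finset.sum_mul]
    rw [show m + 2 - 1 = m + 1 from rfl, geom_sum_eq (ne_of_lt hx1)]
  have hp0 : p 0 = (1 - x) / (1 - x ^ (m + 2)) := by
    rw [hp, hpow, show -β * ((m+2:ℕ):ℝ) * ωM = ((m+2:ℕ):ℝ) * (-β * ωM) by push_cast; ring,
      Real.exp_nat_mul]
    have hxe : Real.exp (-(β * ωM)) = x := by rw [hx]; ring_nf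
    simp [hxe]
  have hx1' : x - 1 ≠ 0 := by linarith
  have hy1' : (1:ℝ) + y ≠ 0 := by linarith
  have hden0' : (1:ℝ) - x ^ (m + 2) ≠ 0 := ne_of_gt hden0
  have hΔ : q0' - q0 = (1 - x ^ (m + 1)) * (y - x) / ((1 - x ^ (m + 2)) * (1 + y)) := by
    rw [hq0', hsum, hp0, hq1, hq0]
    field_simp
    ring
  have hcast : ((m + 2 : ℕ) : ℝ) - 1 = ((m + 1 : ℕ) : ℝ) := by push_cast; ring
  have hEd : Real.exp (β * ((m + 2 : ℕ) : ℝ) * ωM) = x⁻¹ ^ (m + 2) := by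
    rw [show β * ((m+2:ℕ):ℝ) * ωM = ((m+2:ℕ):ℝ) * (β * ωM) by ring, Real.exp_nat_mul, hE]
  have hEd1 : Real.exp (β * (((m + 2 : ℕ) : ℝ) - 1) * ωM) = x⁻¹ ^ (m + 1) := by
    rw [hcast, show β * ((m+1:ℕ):ℝ) * ωM = ((m+1:ℕ):ℝ) * (β * ωM) by ring,
      Real.exp_nat_mul, hE]
  have hxinv1 : (1:ℝ) < x⁻¹ := (one_lt_inv₀ hx0).mpr hx1
  have hpowinv : (1:ℝ) < x⁻¹ ^ (m + 2) := one_lt_pow₀ hxinv1 (by omega)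
  have hpowinv1 : (1:ℝ) < x⁻¹ ^ (m + 1) := one_lt_pow₀ hxinv1 (by omega)
  have hyinv : (0:ℝ) < 1 + y⁻¹ := by positivity
  have hclosed : q0' - q0
      = (Real.exp (β * (((m+2:ℕ):ℝ) - 1) * ωM) - 1) * (Real.exp (β * ωM) - Real.exp (βS * ωS))
        / ((Real.exp (β * ((m+2:ℕ):ℝ) * ωM) - 1) * (1 + Real.exp (βS * ωS))) := by
    rw [hΔ, hEd, hEd1, hE, hY]
    rw [div_eq_div_iff (by positivity) (by nlinarith [mul_pos (sub_pos.mpr hpowinv) hyinv])]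
    have hxne : x ≠ 0 := hx0.ne'
    simp only [inv_pow]
    field_simp
    ring
  refine ⟨hclosed, ?_⟩
  rw [hclosed]
  have hA : 0 < Real.exp (β * (((m+2:ℕ):ℝ) - 1) * ωM) - 1 := by rw [hEd1]; linarith
  have hC : 0 < (Real.exp (β * ((m+2:ℕ):ℝ) * ωM) - 1) * (1 + Real.exp (βS * ωS)) := by
    rw [hEd, hY]; nlinarith [mul_pos (sub_pos.mpr hpowinv) hyinv]
  constructor
  · intro h
    by_contra hlt
    push_neg at hlt
    have hBe : Real.exp (β * ωM) < Real.exp (βS * ωS) := Real.exp_lt_exp.mpr hlt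
    have : (Real.exp (β * (((m+2:ℕ):ℝ) - 1) * ωM) - 1) * (Real.exp (β * ωM) - Real.exp (βS * ωS))
        / ((Real.exp (β * ((m+2:ℕ):ℝ) * ωM) - 1) * (1 + Real.exp (βS * ωS))) < 0 :=
      div_neg_of_neg_of_pos (mul_neg_of_pos_of_neg hA (by linarith)) hC
    linarith
  · intro h
    have hBe : Real.exp (βS * ωS) ≤ Real.exp (β * ωM) := Real.exp_le_exp.mpr h
    exact div_nonneg (mul_nonneg hA.le (by linarith)) hC.le
end

section
/- Harmonic-oscillator limit of the machine-assisted qubit cooling: in the setting of the qubit–qudit exchange protocol with β_S = β, in the limit d → ∞ the ratio of final ground to excited population of the target satisfies q₀'/q₁' = e^{βω_M} + e^{β(ω_M − ω_S)} − 1. In particular, for ω_M ≥ ω_S this ratio is at least e^{βω_M}, i.e., the final effective gap ν defined by e^{βν} = q₀'/q₁' satisfies ν ≥ ω_M. -/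
/-- Harmonic-oscillator (`d → ∞`) limit of the qubit–qudit exchange cooling protocol
with `β_S = β`: the final ground/excited population ratio of the target tends to
`e^{βω_M} + e^{β(ω_M−ω_S)} − 1`; for `ω_M ≥ ω_S` this limit is at least `e^{βω_M}`. -/
theorem stmt15 (β ωS ωM : ℝ) (hβ : 0 < β) (hωS : 0 < ωS) (hωM : 0 < ωM)
    (q0 q1 : ℝ) (hq0 : q0 = 1 / (1 + Real.exp (-β * ωS))) (hq1 : q1 = 1 - q0)
    (p : ℕ → ℕ → ℝ)
    (hp : ∀ d n, p d n = Real.exp (-β * n * ωM) * (1 - Real.exp (-β * ωM))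
      / (1 - Real.exp (-β * d * ωM)))
    (q0' : ℕ → ℝ)
    (hq0' : ∀ d, q0' d = q0 * p d 0 + q1 * ∑ n ∈ Finset.range (d - 1), p d n) :
    Filter.Tendsto (fun d => q0' d / (1 - q0' d)) Filter.atTop
      (nhds (Real.exp (β * ωM) + Real.exp (β * (ωM - ωS)) - 1))
    ∧ (ωS ≤ ωM → Real.exp (β * ωM) ≤ Real.exp (β * ωM) + Real.exp (β * (ωM - ωS)) - 1) := by
  set x := Real.exp (-(β * ωM)) with hxdef
  set y := Real.exp (-(β * ωS)) with hydef
  have hx0 : 0 < x := Real.exp_pos _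
  have hx1 : x < 1 := by
    rw [hxdef]
    exact Real.exp_lt_one_iff.mpr (by nlinarith)
  have hy0 : 0 < y := Real.exp_pos _
  have hq0pos : 0 < q0 := by
    rw [hq0]; positivity
  have hq0v : q0 = 1 / (1 + y) := by rw [hq0, hydef, neg_mul]
  -- key exponent identities
  have hxd : ∀ d : ℕ, Real.exp (-β * d * ωM) = x ^ d := by
    intro d
    rw [hxdef, ← Real.exp_nat_mul]
    ring_nf
  have hxdne : ∀ d : ℕ, (1 : ℝ) - x ^ (d + 1) ≠ 0 := by
    intro d
    have : x ^ (d + 1) < 1 := pow_lt_one₀ hx0.le hx1 (Nat.succ_ne_zero d)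
    linarith
  have hp0 : ∀ d : ℕ, p d 0 = (1 - x) / (1 - x ^ d) := by
    intro d
    have hd := hxd d
    rw [neg_mul, neg_mul] at hd
    rw [hp]
    simp [neg_mul, ← hxdef, hd]
  have hsum : ∀ m : ℕ, ∑ n ∈ Finset.range ((m + 1) - 1), p (m + 1) n
      = (1 - x ^ ((m + 1) - 1)) / (1 - x ^ (m + 1)) := by
    intro m
    have hpn : ∀ n : ℕ, p (m + 1) n = x ^ n * ((1 - x) / (1 - x ^ (m + 1))) := by
      intro n
      rw [hp, hxd, hxd, hxdef]
      ring_nf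
    simp only [Nat.add_sub_cancel]
    rw [Finset.sum_congr rfl fun n _ => hpn n, ← Finset.sum_mul,
      geom_sum_eq (ne_of_lt hx1)]
    have hxne : x - 1 ≠ 0 := by linarith
    rw [div_mul_div_comm,
      show (x ^ m - 1) * (1 - x) = (x - 1) * (1 - x ^ m) by ring,
      mul_div_mul_left _ _ hxne]
  -- explicit formula for q0' (eventually)
  have hform : ∀ᶠ d : ℕ in Filter.atTop, q0' d =
      q0 * ((1 - x) / (1 - x ^ d)) + (1 - q0) * ((1 - x ^ (d - 1)) / (1 - x ^ d)) := by
    filter_upwards [Filter.eventually_ge_atTop 1] with d hd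
    obtain ⟨m, rfl⟩ := Nat.exists_eq_add_of_le hd
    rw [hq0']
    rw [show 1 + m = m + 1 by ring] at *
    rw [hsum, hp0, hq1]
  -- limits of x^d and x^(d-1)
  have hpow : Filter.Tendsto (fun d : ℕ => x ^ d) Filter.atTop (nhds 0) :=
    tendsto_pow_atTop_nhds_zero_of_lt_one hx0.le hx1
  have hpow' : Filter.Tendsto (fun d : ℕ => x ^ (d - 1)) Filter.atTop (nhds 0) :=
    hpow.comp (Filter.tendsto_sub_atTop_nat 1)
  have hT : Filter.Tendsto q0' Filter.atTop (nhds (1 - q0 * x)) := by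
    have : Filter.Tendsto (fun d : ℕ =>
        q0 * ((1 - x) / (1 - x ^ d)) + (1 - q0) * ((1 - x ^ (d - 1)) / (1 - x ^ d)))
        Filter.atTop (nhds (q0 * ((1 - x) / (1 - 0)) + (1 - q0) * ((1 - 0) / (1 - 0)))) := by
      apply Filter.Tendsto.add
      · exact (tendsto_const_nhds.div (tendsto_const_nhds.sub hpow) (by norm_num)).const_mul _
      · exact ((tendsto_const_nhds.sub hpow').div (tendsto_const_nhds.sub hpow) (by norm_num)).const_mul _
    simp only [sub_zero, div_one] at this
    have heq : q0 * (1 - x) + (1 - q0) * 1 = 1 - q0 * x := by ring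
    rw [heq] at this
    exact this.congr' (by filter_upwards [hform] with d hd using hd.symm)
  have hlim : (1 - q0 * x) / (1 - (1 - q0 * x))
      = Real.exp (β * ωM) + Real.exp (β * (ωM - ωS)) - 1 := by
    have h1 : Real.exp (β * ωM) * x = 1 := by
      rw [hxdef, ← Real.exp_add]; ring_nf; exact Real.exp_zero
    have h2 : Real.exp (β * (ωM - ωS)) * x = y := by
      rw [hxdef, hydef, ← Real.exp_add]; ring_nf
    have hy1 : (1 : ℝ) + y ≠ 0 := by positivity
    rw [hq0v]
    field_simp
    rw [sub_sub_cancel, div_eq_iff hx0.ne']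
    nlinarith [h1, h2, hx0]
  constructor
  · have hden : 1 - (1 - q0 * x) ≠ 0 := by
      have : 0 < q0 * x := by positivity
      simp only [sub_sub_cancel]; linarith
    have := hT.div (tendsto_const_nhds.sub hT) hden
    rwa [hlim] at this
  · intro h
    have : (1 : ℝ) ≤ Real.exp (β * (ωM - ωS)) :=
      Real.one_le_exp (by nlinarith)
    linarith
end

section
/- Telescoping decomposition of the incoherent cooling cost: let τ_n := τ(β, λ_n H_S) be Gibbs states of scaled Hamiltonians λ_n H_S (with λ_0 = 1 < λ_1 < … < λ_N), and for γ ≥ 0 define the per-stage cold-machine energy ΔE_{C_n} := ((γ+1)λ_n − γ)·tr[H_S(τ_n − τ_{n−1})]. Then the total dissipated energy satisfies −Σ_{n=1}^N ΔE_{C_n} = (γ+1)/β · Σ_{n=1}^N D(τ_{n−1} ‖ τ_n) − (γ+1)/β · (S(τ_N) − S(τ_0)) + γ·tr[H_S(τ_N − τ_0)]. -/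
open Matrix
open scoped Kronecker ComplexOrder

noncomputable section

open Classical in
/-- von Neumann entropy `S(ρ) = −tr(ρ log ρ)`, computed via the eigenvalues
(junk value `0` for non-Hermitian input). -/
def vN {n : Type*} [Fintype n] [DecidableEq n] (A : Matrix n n ℂ) : ℝ :=
  if h : A.IsHermitian then ∑ i, Real.negMulLog (h.eigenvalues i) else 0

open Classical in
/-- Matrix logarithm via the Hermitian functional calculus (junk value `0` otherwise). -/
def mlog {n : Type*} [Fintype n] [DecidableEq n] (A : Matrix n n ℂ) : Matrix n n ℂ :=
  if h : A.IsHermitian then h.cfc Real.log else 0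

/-- Quantum relative entropy `D(ρ‖σ) = tr[ρ(log ρ − log σ)]`. -/
def relEnt {n : Type*} [Fintype n] [DecidableEq n] (A B : Matrix n n ℂ) : ℝ :=
  ((A * (mlog A - mlog B)).trace).re

/-- The thermal (Gibbs) state `exp(−βH)/tr(exp(−βH))`. -/
def gibbs {n : Type*} [Fintype n] [DecidableEq n] (β : ℝ) (H : Matrix n n ℂ) :
    Matrix n n ℂ :=
  ((NormedSpace.exp ((-β : ℂ) • H)).trace)⁻¹ • NormedSpace.exp ((-β : ℂ) • H)

namespace Stmt16Aux

variable {d : Type*} [Fintype d] [DecidableEq d]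

lemma contOn (f : ℝ → ℝ) (A : Matrix d d ℂ) : ContinuousOn f (spectrum ℝ A) := by
  have h := (Matrix.finite_real_spectrum (A:=A)); exact h.continuousOn f

lemma contOn' (f g : ℝ → ℝ) (A : Matrix d d ℂ) : ContinuousOn g (f '' spectrum ℝ A) := by
  have h := (Matrix.finite_real_spectrum (A:=A)).image f; exact h.continuousOn g

lemma trace_cfc {A : Matrix d d ℂ} (hA : A.IsHermitian) (f : ℝ → ℝ) :
    (cfc f A).trace = ∑ i, (f (hA.eigenvalues i) : ℂ) := by
  rw [hA.cfc_eq, Matrix.IsHermitian.cfc, Unitary.conjStarAlgAut_apply, Matrix.trace_mul_cycle,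
      Unitary.star_mul_self_of_mem (SetLike.coe_mem _), Matrix.one_mul,
      Matrix.trace_diagonal]
  rfl

set_option maxHeartbeats 1000000 in
lemma exp_cfc {A : Matrix d d ℂ} (hA : A.IsHermitian) (f : ℝ → ℝ) :
    NormedSpace.exp (cfc f A) = cfc (fun x => Real.exp (f x)) A := by
  rw [hA.cfc_eq, hA.cfc_eq, Matrix.IsHermitian.cfc, Matrix.IsHermitian.cfc,
    Unitary.conjStarAlgAut_apply, Unitary.conjStarAlgAut_apply]
  have hU : IsUnit (hA.eigenvectorUnitary : Matrix d d ℂ) :=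
    ⟨Unitary.toUnits hA.eigenvectorUnitary, rfl⟩
  have hinv : (hA.eigenvectorUnitary : Matrix d d ℂ)⁻¹
      = star (hA.eigenvectorUnitary : Matrix d d ℂ) :=
    Matrix.inv_eq_left_inv (Unitary.star_mul_self_of_mem (SetLike.coe_mem _))
  rw [← hinv, Matrix.exp_conj _ _ hU, Matrix.exp_diagonal]
  have he : NormedSpace.exp ((RCLike.ofReal : ℝ → ℂ) ∘ f ∘ hA.eigenvalues)
      = (RCLike.ofReal : ℝ → ℂ) ∘ (fun x => Real.exp (f x)) ∘ hA.eigenvalues := by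
    funext i
    simp [Pi.exp_def, ← Complex.exp_eq_exp_ℂ]
  rw [he]

lemma real_smul_cfc (r : ℝ) {A : Matrix d d ℂ} (hA : A.IsHermitian) (f : ℝ → ℝ) :
    ((r : ℂ)) • cfc f A = cfc (fun x => r * f x) A := by
  rw [cfc_const_mul r f A (contOn f A)]
  ext i j
  simp [Matrix.smul_apply, Complex.real_smul]

lemma gibbs_cfc {A : Matrix d d ℂ} (hA : A.IsHermitian) (β l : ℝ) :
    gibbs β ((l : ℂ) • A)
      = cfc (fun x => (∑ i, Real.exp (-(β * l) * hA.eigenvalues i))⁻¹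
          * Real.exp (-(β * l) * x)) A := by
  have hsa : IsSelfAdjoint A := hA
  have h1 : ((-β : ℂ)) • ((l : ℂ) • A) = cfc (fun x => -(β * l) * x) A := by
    rw [smul_smul, ← real_smul_cfc (-(β * l)) hA (fun x => x), cfc_id' ℝ A hsa]
    push_cast
    ring_nf
  rw [gibbs, h1, exp_cfc hA _, trace_cfc hA]
  have hZ : (∑ i, ((Real.exp (-(β * l) * hA.eigenvalues i)) : ℂ))
      = ((∑ i, Real.exp (-(β * l) * hA.eigenvalues i) : ℝ) : ℂ) := by push_cast; rfl
  rw [hZ, ← Complex.ofReal_inv,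
    real_smul_cfc _ hA (fun x => Real.exp (-(β * l) * x))]

lemma mlog_cfc {A : Matrix d d ℂ} (hA : A.IsHermitian) (f : ℝ → ℝ) :
    mlog (cfc f A) = cfc (fun x => Real.log (f x)) A := by
  have hsa : IsSelfAdjoint (cfc (R := ℝ) f A) := cfc_predicate f A
  have hherm : (cfc (R := ℝ) f A).IsHermitian := hsa
  unfold mlog
  rw [dif_pos hherm, ← hherm.cfc_eq]
  exact (cfc_comp Real.log f A hA (contOn' f Real.log A) (contOn f A)).symm

lemma vN_eq {A : Matrix d d ℂ} (hA : A.IsHermitian) :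
    vN A = ((cfc Real.negMulLog A).trace).re := by
  unfold vN
  rw [dif_pos hA, trace_cfc hA Real.negMulLog]
  simp

end Stmt16Aux

open Stmt16Aux in
/-- Telescoping decomposition of the incoherent cooling cost along Gibbs states
`τ_n = τ(β, λ_n H_S)` of scaled Hamiltonians:
`−Σ ΔE_{C_n} = (γ+1)/β·Σ D(τ_{n−1}‖τ_n) − (γ+1)/β·(S(τ_N)−S(τ_0)) + γ·tr[H_S(τ_N−τ_0)]`. -/
theorem stmt16 {d : Type*} [Fintype d] [DecidableEq d]
    (HS : Matrix d d ℂ) (hHS : HS.IsHermitian)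
    (β βH : ℝ) (hβH : 0 < βH) (hβ : βH < β)
    (γ : ℝ) (hγ : γ = βH / (β - βH))
    (N : ℕ) (lam : ℕ → ℝ) (hlam0 : lam 0 = 1)
    (hmono : ∀ n < N, lam n < lam (n + 1))
    (τ : ℕ → Matrix d d ℂ)
    (hτ : ∀ n, τ n = gibbs β (((lam n : ℝ) : ℂ) • HS)) :
    -(∑ n ∈ Finset.range N,
        ((γ + 1) * lam (n + 1) - γ) * ((HS * (τ (n + 1) - τ n)).trace).re)
      = (γ + 1) / β * ∑ n ∈ Finset.range N, relEnt (τ n) (τ (n + 1))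
        - (γ + 1) / β * (vN (τ N) - vN (τ 0))
        + γ * ((HS * (τ N - τ 0)).trace).re := by
  classical
  have hβ0 : (0:ℝ) < β := lt_trans hβH hβ
  have hβne : β ≠ 0 := ne_of_gt hβ0
  rcases isEmpty_or_nonempty d with hd | hd
  · have htr : ∀ A : Matrix d d ℂ, A.trace = 0 := fun A => by
      simp [Matrix.trace]
    have hvn : ∀ A : Matrix d d ℂ, vN A = 0 := fun A => by
      unfold vN; split <;> simp
    simp [relEnt, htr, hvn]
  · have hsa : IsSelfAdjoint HS := hHS
    set ε : d → ℝ := hHS.eigenvalues with hε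
    set Z : ℕ → ℝ := fun m => ∑ i, Real.exp (-(β * lam m) * ε i) with hZdef
    set p : ℕ → ℝ → ℝ := fun m x => (Z m)⁻¹ * Real.exp (-(β * lam m) * x) with hpdef
    have hZpos : ∀ m, 0 < Z m := fun m =>
      Finset.sum_pos (fun i _ => Real.exp_pos _) Finset.univ_nonempty
    have hppos : ∀ m x, 0 < p m x := fun m x =>
      mul_pos (inv_pos.2 (hZpos m)) (Real.exp_pos _)
    have hτp : ∀ m, τ m = cfc (p m) HS := by
      intro m
      rw [hτ m, Stmt16Aux.gibbs_cfc hHS β (lam m)]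
    have hsum1 : ∀ m, ∑ i, p m (ε i) = 1 := by
      intro m
      simp only [hpdef, ← Finset.mul_sum]
      exact inv_mul_cancel₀ (ne_of_gt (hZpos m))
    have hlog : ∀ m x, Real.log (p m x) = -Real.log (Z m) + -(β * lam m) * x := by
      intro m x
      simp only [hpdef]
      rw [Real.log_mul (by positivity) (by positivity), Real.log_inv, Real.log_exp]
    have hg : ∀ m, ((HS * τ m).trace).re = ∑ i, ε i * p m (ε i) := by
      intro m
      rw [hτp m]
      nth_rewrite 1 [← cfc_id' ℝ HS hsa]
      rw [← cfc_mul (fun x : ℝ => x) (p m) HS (contOn _ HS) (contOn _ HS),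
        Stmt16Aux.trace_cfc hHS]
      simp
      rfl
    have hvn : ∀ m, vN (τ m) = ∑ i, Real.negMulLog (p m (ε i)) := by
      intro m
      have hherm : (cfc (R := ℝ) (p m) HS).IsHermitian := cfc_predicate (p m) HS
      rw [hτp m, Stmt16Aux.vN_eq hherm,
        ← cfc_comp Real.negMulLog (p m) HS hsa (contOn' _ _ HS) (contOn _ HS),
        Stmt16Aux.trace_cfc hHS]
      simp
      rfl
    have hrel : ∀ m k, relEnt (τ m) (τ k)
        = ∑ i, p m (ε i) * (Real.log (p m (ε i)) - Real.log (p k (ε i))) := by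
      intro m k
      unfold relEnt
      rw [hτp m, hτp k, Stmt16Aux.mlog_cfc hHS (p m), Stmt16Aux.mlog_cfc hHS (p k),
        ← cfc_sub (fun x => Real.log (p m x)) (fun x => Real.log (p k x)) HS
          (contOn _ HS) (contOn _ HS),
        ← cfc_mul (p m) (fun x => Real.log (p m x) - Real.log (p k x)) HS
          (contOn _ HS) (contOn _ HS),
        Stmt16Aux.trace_cfc hHS]
      simp
      rfl
    -- per-step identity
    have hstep : ∀ n, relEnt (τ n) (τ (n + 1))
        = -(β * lam (n + 1)) * (((HS * τ (n + 1)).trace).re - ((HS * τ n).trace).re)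
          + (vN (τ (n + 1)) - vN (τ n)) := by
      intro n
      rw [hrel n (n + 1), hvn (n + 1), hvn n, hg (n + 1), hg n]
      have key : ∀ i : d, p n (ε i) * (Real.log (p n (ε i)) - Real.log (p (n + 1) (ε i)))
          = (-(β * lam (n + 1)) * (ε i * p (n + 1) (ε i) - ε i * p n (ε i))
              + (Real.negMulLog (p (n + 1) (ε i)) - Real.negMulLog (p n (ε i))))
            + Real.log (Z (n + 1)) * (p n (ε i) - p (n + 1) (ε i)) := by
        intro i
        rw [Real.negMulLog, Real.negMulLog, hlog n, hlog (n + 1)]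
        ring
      calc ∑ i, p n (ε i) * (Real.log (p n (ε i)) - Real.log (p (n + 1) (ε i)))
          = ∑ i, ((-(β * lam (n + 1)) * (ε i * p (n + 1) (ε i) - ε i * p n (ε i))
              + (Real.negMulLog (p (n + 1) (ε i)) - Real.negMulLog (p n (ε i))))
            + Real.log (Z (n + 1)) * (p n (ε i) - p (n + 1) (ε i))) :=
            Finset.sum_congr rfl fun i _ => key i
        _ = (∑ i, (-(β * lam (n + 1)) * (ε i * p (n + 1) (ε i) - ε i * p n (ε i))
              + (Real.negMulLog (p (n + 1) (ε i)) - Real.negMulLog (p n (ε i)))))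
            + Real.log (Z (n + 1)) * ((∑ i, p n (ε i)) - ∑ i, p (n + 1) (ε i)) := by
            rw [Finset.sum_add_distrib, ← Finset.mul_sum, Finset.sum_sub_distrib]
        _ = -(β * lam (n + 1)) * ((∑ i, ε i * p (n + 1) (ε i)) - ∑ i, ε i * p n (ε i))
            + ((∑ i, Real.negMulLog (p (n + 1) (ε i)))
              - ∑ i, Real.negMulLog (p n (ε i))) := by
            rw [hsum1 n, hsum1 (n + 1), Finset.sum_add_distrib, ← Finset.mul_sum,
              Finset.sum_sub_distrib, Finset.sum_sub_distrib]
            ring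
    -- telescoping assembly
    have hD : ∀ n : ℕ, ((HS * (τ (n + 1) - τ n)).trace).re
        = ((HS * τ (n + 1)).trace).re - ((HS * τ n).trace).re := by
      intro n
      rw [Matrix.mul_sub, Matrix.trace_sub, Complex.sub_re]
    have hDN : ((HS * (τ N - τ 0)).trace).re
        = ((HS * τ N).trace).re - ((HS * τ 0).trace).re := by
      rw [Matrix.mul_sub, Matrix.trace_sub, Complex.sub_re]
    have h1 : ∑ n ∈ Finset.range N, relEnt (τ n) (τ (n + 1))
        = (∑ n ∈ Finset.range N, -(β * lam (n + 1))
            * (((HS * τ (n + 1)).trace).re - ((HS * τ n).trace).re))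
          + (vN (τ N) - vN (τ 0)) := by
      rw [← Finset.sum_range_sub (fun m => vN (τ m)) N, ← Finset.sum_add_distrib]
      exact Finset.sum_congr rfl fun n _ => hstep n
    have h2 : ((HS * τ N).trace).re - ((HS * τ 0).trace).re
        = ∑ n ∈ Finset.range N,
            (((HS * τ (n + 1)).trace).re - ((HS * τ n).trace).re) :=
      (Finset.sum_range_sub (fun m => ((HS * τ m).trace).re) N).symm
    simp only [hD, hDN]
    rw [h1, h2, mul_add]
    have hclean : ∀ SA SV SD : ℝ,
        ((γ + 1) / β * SA + (γ + 1) / β * SV) - (γ + 1) / β * SV + γ * SD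
          = (γ + 1) / β * SA + γ * SD := fun _ _ _ => by ring
    rw [hclean]
    rw [Finset.mul_sum, Finset.mul_sum, ← Finset.sum_add_distrib, ← Finset.sum_neg_distrib]
    refine Finset.sum_congr rfl fun n _ => ?_
    field_simp
    ring
end
end

section
/- Carnot–Landauer identity for the staged incoherent protocol: with τ_n := τ(β, λ_n H_S) as above and the hot-machine energies ΔE_{H_n} := (γ+1)(λ_n − 1)·tr[H_S(τ_n − τ_{n−1})], define ΔF_S^β := tr[H_S(τ_N − τ_0)] − β⁻¹(S(τ_N) − S(τ_0)) and η := (γ+1)⁻¹. Then ΔF_S^β + η·Σ_{n=1}^N ΔE_{H_n} = −β⁻¹·Σ_{n=1}^N D(τ_{n−1} ‖ τ_n). In particular, ΔF_S^β + η·ΔE_H ≤ 0 (the Carnot–Landauer bound), with equality iff all consecutive Gibbs states coincide. -/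
open Matrix
open scoped Kronecker ComplexOrder

noncomputable section

namespace CLaux
variable {d : Type*} [Fintype d] [DecidableEq d] {A : Matrix d d ℂ} (hA : A.IsHermitian)

lemma star_mul_self : star (hA.eigenvectorUnitary : Matrix d d ℂ) * hA.eigenvectorUnitary = 1 :=
  Matrix.mem_unitaryGroup_iff'.mp hA.eigenvectorUnitary.2

lemma mul_star_self : (hA.eigenvectorUnitary : Matrix d d ℂ) * star hA.eigenvectorUnitary = 1 :=
  Matrix.mem_unitaryGroup_iff.mp hA.eigenvectorUnitary.2

lemma cfc_mul (f g : ℝ → ℝ) :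
    hA.cfc f * hA.cfc g = hA.cfc (fun x => f x * g x) := by
  have h2 : ∀ X : Matrix d d ℂ,
      star (hA.eigenvectorUnitary : Matrix d d ℂ) *
        ((hA.eigenvectorUnitary : Matrix d d ℂ) * X) = X := by
    intro X; rw [← mul_assoc, star_mul_self hA, one_mul]
  have hd : (diagonal ((RCLike.ofReal : ℝ → ℂ) ∘ f ∘ hA.eigenvalues)) *
      (diagonal ((RCLike.ofReal : ℝ → ℂ) ∘ g ∘ hA.eigenvalues)) =
      diagonal ((RCLike.ofReal : ℝ → ℂ) ∘ (fun x => f x * g x) ∘ hA.eigenvalues) := by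
    rw [diagonal_mul_diagonal]
    refine congrArg diagonal ?_
    funext i; simp [Function.comp]
  simp only [Matrix.IsHermitian.cfc, Unitary.conjStarAlgAut_apply]
  simp only [mul_assoc, h2]
  rw [← mul_assoc (diagonal _), hd]

lemma cfc_sub (f g : ℝ → ℝ) :
    hA.cfc f - hA.cfc g = hA.cfc (fun x => f x - g x) := by
  have hd : (diagonal ((RCLike.ofReal : ℝ → ℂ) ∘ f ∘ hA.eigenvalues)) -
      (diagonal ((RCLike.ofReal : ℝ → ℂ) ∘ g ∘ hA.eigenvalues)) =
      diagonal ((RCLike.ofReal : ℝ → ℂ) ∘ (fun x => f x - g x) ∘ hA.eigenvalues) := by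
    rw [diagonal_sub]
    refine congrArg diagonal ?_
    funext i; simp [Function.comp]
  simp only [Matrix.IsHermitian.cfc, Unitary.conjStarAlgAut_apply, ← Matrix.sub_mul, ← Matrix.mul_sub, hd]

lemma trace_cfc (f : ℝ → ℝ) :
    (hA.cfc f).trace = ∑ i, ((f (hA.eigenvalues i) : ℝ) : ℂ) := by
  rw [Matrix.IsHermitian.cfc, Unitary.conjStarAlgAut_apply, Matrix.trace_mul_cycle, star_mul_self hA, one_mul,
    Matrix.trace_diagonal]
  rfl

lemma re_trace_cfc (f : ℝ → ℝ) :
    ((hA.cfc f).trace).re = ∑ i, f (hA.eigenvalues i) := by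
  rw [trace_cfc hA, ← Complex.ofReal_sum]
  exact Complex.ofReal_re _

lemma cfc_isHermitian (f : ℝ → ℝ) : (hA.cfc f).IsHermitian := by
  have h := cfc_predicate (R := ℝ) f A
  rwa [hA.cfc_eq f] at h

lemma cfc_id' : hA.cfc (fun x => x) = A := by
  conv_rhs => rw [hA.spectral_theorem]
  rfl

lemma mul_cfc (g : ℝ → ℝ) : A * hA.cfc g = hA.cfc (fun x => x * g x) := by
  have h := cfc_mul hA (fun x => x) g
  rwa [cfc_id' hA] at h

lemma smul_cfc (r : ℝ) (f : ℝ → ℝ) :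
    (r : ℂ) • hA.cfc f = hA.cfc (fun x => r * f x) := by
  have hfun : ((RCLike.ofReal : ℝ → ℂ) ∘ (fun x => r * f x) ∘ hA.eigenvalues)
      = (r : ℂ) • ((RCLike.ofReal : ℝ → ℂ) ∘ f ∘ hA.eigenvalues) := by
    funext i; simp [Function.comp]
  simp only [Matrix.IsHermitian.cfc, Unitary.conjStarAlgAut_apply]
  conv_rhs => rw [hfun, diagonal_smul, mul_smul_comm, smul_mul_assoc]

lemma cfc_congr' {f g : ℝ → ℝ} (h : ∀ i, f (hA.eigenvalues i) = g (hA.eigenvalues i)) :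
    hA.cfc f = hA.cfc g := by
  have hfun : ((RCLike.ofReal : ℝ → ℂ) ∘ f ∘ hA.eigenvalues)
      = ((RCLike.ofReal : ℝ → ℂ) ∘ g ∘ hA.eigenvalues) := by
    funext i; simp [Function.comp, h i]
  simp only [Matrix.IsHermitian.cfc, hfun]

lemma exp_smul (c : ℝ) :
    NormedSpace.exp ((c : ℂ) • A) = hA.cfc (fun x => Real.exp (c * x)) := by
  have hU : IsUnit (hA.eigenvectorUnitary : Matrix d d ℂ) :=
    ⟨⟨_, star (hA.eigenvectorUnitary : Matrix d d ℂ), mul_star_self hA, star_mul_self hA⟩, rfl⟩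
  have hinv : (hA.eigenvectorUnitary : Matrix d d ℂ)⁻¹
      = star (hA.eigenvectorUnitary : Matrix d d ℂ) :=
    Matrix.inv_eq_left_inv (star_mul_self hA)
  have hfun : ((RCLike.ofReal : ℝ → ℂ) ∘ (fun x => c * x) ∘ hA.eigenvalues)
      = (c : ℂ) • ((RCLike.ofReal : ℝ → ℂ) ∘ hA.eigenvalues) := by
    funext i; simp [Function.comp]
  have h1 : (c : ℂ) • A = (hA.eigenvectorUnitary : Matrix d d ℂ) *
      diagonal ((RCLike.ofReal : ℝ → ℂ) ∘ (fun x => c * x) ∘ hA.eigenvalues) *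
      (hA.eigenvectorUnitary : Matrix d d ℂ)⁻¹ := by
    rw [hinv]
    conv_lhs => rw [hA.spectral_theorem, Unitary.conjStarAlgAut_apply]
    rw [hfun, diagonal_smul, mul_smul_comm, smul_mul_assoc]
  rw [h1, Matrix.exp_conj _ _ hU, Matrix.exp_diagonal, hinv, Matrix.IsHermitian.cfc,
    Unitary.conjStarAlgAut_apply]
  refine congrArg (fun D => _ * D * star (hA.eigenvectorUnitary : Matrix d d ℂ)) ?_
  refine congrArg diagonal ?_
  funext i
  simp only [Pi.coe_exp, Function.comp_apply]
  rw [← Complex.exp_eq_exp_ℂ]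
  exact (Complex.ofReal_exp _).symm

lemma cfc_comp_her (f g : ℝ → ℝ) (hf : Continuous f)
    (hg : ContinuousOn g (f '' Set.range hA.eigenvalues))
    (hB : (hA.cfc f).IsHermitian) :
    hB.cfc g = hA.cfc (g ∘ f) := by
  have hsp : spectrum ℝ A = Set.range hA.eigenvalues := hA.spectrum_real_eq_range_eigenvalues
  have hg' : ContinuousOn g (f '' spectrum ℝ A) := by rw [hsp]; exact hg
  have hco : cfc (g ∘ f) A = cfc g (cfc f A) := cfc_comp g f A hA hg' hf.continuousOn
  calc hB.cfc g = cfc g (hA.cfc f) := (hB.cfc_eq g).symm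
    _ = cfc g (cfc f A) := by rw [hA.cfc_eq f]
    _ = cfc (g ∘ f) A := hco.symm
    _ = hA.cfc (g ∘ f) := hA.cfc_eq _

lemma kl_nonneg_eq {ι : Type*} [Fintype ι] (p q : ι → ℝ) (hp : ∀ i, 0 < p i)
    (hq : ∀ i, 0 < q i) (hps : ∑ i, p i = 1) (hqs : ∑ i, q i = 1) :
    0 ≤ ∑ i, p i * (Real.log (p i) - Real.log (q i)) ∧
    ((∑ i, p i * (Real.log (p i) - Real.log (q i))) = 0 ↔ ∀ i, p i = q i) := by
  set t : ι → ℝ := fun i => p i * (Real.log (p i) - Real.log (q i)) - (p i - q i) with ht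
  have htn : ∀ i, 0 ≤ t i := by
    intro i
    have hlog : Real.log (q i / p i) ≤ q i / p i - 1 :=
      Real.log_le_sub_one_of_pos (div_pos (hq i) (hp i))
    rw [Real.log_div (hq i).ne' (hp i).ne'] at hlog
    have h2 := mul_le_mul_of_nonneg_left hlog (hp i).le
    have hpq : p i * (q i / p i - 1) = q i - p i := by field_simp [(hp i).ne']
    rw [hpq] at h2
    rw [ht]
    dsimp only
    nlinarith
  have hsum : ∑ i, t i = ∑ i, p i * (Real.log (p i) - Real.log (q i)) := by
    rw [ht]
    dsimp only
    rw [Finset.sum_sub_distrib, Finset.sum_sub_distrib, hps, hqs]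
    ring
  constructor
  · rw [← hsum]; exact Finset.sum_nonneg fun i _ => htn i
  constructor
  · intro h0
    rw [← hsum] at h0
    have hz := (Finset.sum_eq_zero_iff_of_nonneg (fun i _ => htn i)).mp h0
    intro i
    by_contra hne
    have hne' : q i / p i ≠ 1 := by
      intro hcon
      exact hne ((div_eq_one_iff_eq (hp i).ne').mp hcon).symm
    have hlog : Real.log (q i / p i) < q i / p i - 1 :=
      Real.log_lt_sub_one_of_pos (div_pos (hq i) (hp i)) hne'
    rw [Real.log_div (hq i).ne' (hp i).ne'] at hlog
    have h2 := mul_lt_mul_of_pos_left hlog (hp i)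
    have hpq : p i * (q i / p i - 1) = q i - p i := by field_simp [(hp i).ne']
    rw [hpq] at h2
    have h3 := hz i (Finset.mem_univ i)
    rw [ht] at h3
    dsimp only at h3
    nlinarith
  · intro h
    apply Finset.sum_eq_zero
    intro i _
    rw [h i]
    ring

end CLaux

/-- Carnot–Landauer identity for the staged incoherent protocol:
`ΔF_S^β + η·Σ ΔE_{H_n} = −β⁻¹·Σ D(τ_{n−1}‖τ_n)`; in particular the Carnot–Landauer
bound `ΔF_S^β + η·ΔE_H ≤ 0` holds, with equality iff all consecutive Gibbs states
coincide. -/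
theorem stmt17 {d : Type*} [Fintype d] [DecidableEq d]
    (HS : Matrix d d ℂ) (hHS : HS.IsHermitian)
    (β βH : ℝ) (hβH : 0 < βH) (hβ : βH < β)
    (γ : ℝ) (hγ : γ = βH / (β - βH))
    (η : ℝ) (hη : η = (γ + 1)⁻¹)
    (N : ℕ) (lam : ℕ → ℝ) (hlam0 : lam 0 = 1)
    (hmono : ∀ n < N, lam n < lam (n + 1))
    (τ : ℕ → Matrix d d ℂ)
    (hτ : ∀ n, τ n = gibbs β (((lam n : ℝ) : ℂ) • HS))
    (ΔFS : ℝ)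
    (hFS : ΔFS = ((HS * (τ N - τ 0)).trace).re - β⁻¹ * (vN (τ N) - vN (τ 0)))
    (ΔEH : ℕ → ℝ)
    (hEH : ∀ n, ΔEH n = (γ + 1) * (lam (n + 1) - 1) * ((HS * (τ (n + 1) - τ n)).trace).re) :
    ΔFS + η * ∑ n ∈ Finset.range N, ΔEH n
        = -β⁻¹ * ∑ n ∈ Finset.range N, relEnt (τ n) (τ (n + 1))
    ∧ ΔFS + η * ∑ n ∈ Finset.range N, ΔEH n ≤ 0
    ∧ (ΔFS + η * ∑ n ∈ Finset.range N, ΔEH n = 0 ↔ ∀ n < N, τ (n + 1) = τ n) := by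
  have hβ0 : (0:ℝ) < β := hβH.trans hβ
  have hγpos : 0 < γ + 1 := by
    have : 0 < γ := by rw [hγ]; exact div_pos hβH (by linarith)
    linarith
  have hηγ : η * (γ + 1) = 1 := by rw [hη]; exact inv_mul_cancel₀ hγpos.ne'
  have hβinv : β⁻¹ * β = 1 := inv_mul_cancel₀ hβ0.ne'
  rcases isEmpty_or_nonempty d with hd | hd
  · -- empty index type: everything vanishes
    have htr : ∀ B : Matrix d d ℂ, B.trace = 0 := fun B => by
      simp [Matrix.trace]
    have hvN0 : ∀ B : Matrix d d ℂ, vN B = 0 := fun B => by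
      unfold vN; split <;> simp
    have hFS0 : ΔFS = 0 := by rw [hFS, htr, hvN0, hvN0]; simp
    have hEH0 : ∀ n, ΔEH n = 0 := fun n => by rw [hEH, htr]; simp
    have hre : ∀ n, relEnt (τ n) (τ (n+1)) = 0 := fun n => by unfold relEnt; rw [htr]; simp
    have hsum1 : ∑ n ∈ Finset.range N, ΔEH n = 0 := Finset.sum_eq_zero fun n _ => hEH0 n
    have hsum2 : ∑ n ∈ Finset.range N, relEnt (τ n) (τ (n+1)) = 0 :=
      Finset.sum_eq_zero fun n _ => hre n
    refine ⟨by rw [hFS0, hsum1, hsum2]; ring, by rw [hFS0, hsum1]; ring_nf; exact le_rfl, ?_⟩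
    constructor
    · intro _ n _
      exact Subsingleton.elim _ _
    · intro _
      rw [hFS0, hsum1]; ring
  · -- nonempty case
    set Z : ℕ → ℝ := fun n => ∑ i, Real.exp (-(β * lam n) * hHS.eigenvalues i) with hZdef
    have hZ : ∀ n, 0 < Z n := fun n =>
      Finset.sum_pos (fun i _ => Real.exp_pos _) Finset.univ_nonempty
    set f : ℕ → ℝ → ℝ := fun n x => Real.exp (-(β * lam n) * x) / Z n with hfdef
    have hfpos : ∀ n x, 0 < f n x := fun n x => div_pos (Real.exp_pos _) (hZ n)
    have hfc : ∀ n, Continuous (f n) :=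
      fun n => (Real.continuous_exp.comp (continuous_const.mul continuous_id)).div_const _
    have hτf : ∀ n, τ n = hHS.cfc (f n) := by
      intro n
      rw [hτ n]
      unfold gibbs
      have hsm : (-β : ℂ) • (((lam n : ℝ) : ℂ) • HS) = ((-(β * lam n) : ℝ) : ℂ) • HS := by
        rw [smul_smul]; congr 1; push_cast; ring
      rw [hsm, CLaux.exp_smul hHS, CLaux.trace_cfc hHS]
      have hzc : (∑ i, ((Real.exp (-(β * lam n) * hHS.eigenvalues i) : ℝ) : ℂ))
          = ((Z n : ℝ) : ℂ) := by
        rw [hZdef]; push_cast; rfl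
      rw [hzc, ← Complex.ofReal_inv, CLaux.smul_cfc hHS]
      refine congrArg _ ?_
      funext x
      rw [inv_mul_eq_div]
    set p : ℕ → d → ℝ := fun n i => f n (hHS.eigenvalues i) with hpdef
    have hps : ∀ n, ∑ i, p n i = 1 := by
      intro n
      have h1 : ∑ i, p n i = (∑ i, Real.exp (-(β * lam n) * hHS.eigenvalues i)) / Z n := by
        rw [Finset.sum_div]
      rw [h1]
      exact div_self (hZ n).ne'
    set E : ℕ → ℝ := fun n => ∑ i, hHS.eigenvalues i * p n i with hEdef
    set S : ℕ → ℝ := fun n => ∑ i, Real.negMulLog (p n i) with hSdef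
    set KL : ℕ → ℝ := fun n => ∑ i, p n i * (Real.log (p n i) - Real.log (p (n+1) i))
      with hKLdef
    have hE : ∀ n, ((HS * τ n).trace).re = E n := by
      intro n
      rw [hτf n, CLaux.mul_cfc hHS, CLaux.re_trace_cfc hHS]
    have hEdiff : ∀ n m, ((HS * (τ n - τ m)).trace).re = E n - E m := by
      intro n m
      rw [Matrix.mul_sub, Matrix.trace_sub, Complex.sub_re, hE n, hE m]
    have hvN : ∀ n, vN (τ n) = S n := by
      intro n
      rw [hτf n]
      have hB : (hHS.cfc (f n)).IsHermitian := CLaux.cfc_isHermitian hHS (f n)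
      calc vN (hHS.cfc (f n)) = ∑ i, Real.negMulLog (hB.eigenvalues i) := by
            unfold vN; rw [dif_pos hB]
        _ = ((hB.cfc Real.negMulLog).trace).re := (CLaux.re_trace_cfc hB _).symm
        _ = ((hHS.cfc (Real.negMulLog ∘ f n)).trace).re := by
            rw [CLaux.cfc_comp_her hHS (f n) Real.negMulLog (hfc n)
              Real.continuous_negMulLog.continuousOn hB]
        _ = S n := CLaux.re_trace_cfc hHS _
    have hmlog : ∀ n, mlog (τ n) = hHS.cfc (fun x => Real.log (f n x)) := by
      intro n
      rw [hτf n]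
      have hB : (hHS.cfc (f n)).IsHermitian := CLaux.cfc_isHermitian hHS (f n)
      have hlogc : ContinuousOn Real.log (f n '' Set.range hHS.eigenvalues) := by
        refine Real.continuousOn_log.mono ?_
        rintro y ⟨x, -, rfl⟩
        exact (hfpos n x).ne'
      calc mlog (hHS.cfc (f n)) = hB.cfc Real.log := by unfold mlog; rw [dif_pos hB]
        _ = hHS.cfc (Real.log ∘ f n) := CLaux.cfc_comp_her hHS (f n) Real.log (hfc n) hlogc hB
        _ = hHS.cfc (fun x => Real.log (f n x)) := rfl
    have hKL : ∀ n, relEnt (τ n) (τ (n+1)) = KL n := by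
      intro n
      unfold relEnt
      rw [hmlog n, hmlog (n+1), CLaux.cfc_sub hHS, hτf n, CLaux.cfc_mul hHS,
        CLaux.re_trace_cfc hHS]

    have hlogp : ∀ n i, Real.log (p n i)
        = -(β * lam n) * hHS.eigenvalues i - Real.log (Z n) := by
      intro n i
      have h1 : p n i = Real.exp (-(β * lam n) * hHS.eigenvalues i) / Z n := rfl
      rw [h1, Real.log_div (Real.exp_pos _).ne' (hZ n).ne', Real.log_exp]
    have hSval : ∀ n, S n = β * lam n * E n + Real.log (Z n) := by
      intro n
      have h1 : ∀ i, Real.negMulLog (p n i)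
          = (β * lam n) * (hHS.eigenvalues i * p n i) + Real.log (Z n) * p n i := by
        intro i
        rw [Real.negMulLog, hlogp n i]
        ring
      calc S n = ∑ i, ((β * lam n) * (hHS.eigenvalues i * p n i)
              + Real.log (Z n) * p n i) := Finset.sum_congr rfl fun i _ => h1 i
        _ = (β * lam n) * E n + Real.log (Z n) * 1 := by
            rw [Finset.sum_add_distrib, ← Finset.mul_sum, ← Finset.mul_sum, hps n, hEdef]
        _ = β * lam n * E n + Real.log (Z n) := by ring
    have hKLval : ∀ n, KL n = (S (n+1) - S n) + β * lam (n+1) * (E n - E (n+1)) := by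
      intro n
      have h1 : ∀ i, p n i * (Real.log (p n i) - Real.log (p (n+1) i))
          = (β * lam (n+1) - β * lam n) * (hHS.eigenvalues i * p n i)
            + (Real.log (Z (n+1)) - Real.log (Z n)) * p n i := by
        intro i
        rw [hlogp n i, hlogp (n+1) i]
        ring
      calc KL n = ∑ i, ((β * lam (n+1) - β * lam n) * (hHS.eigenvalues i * p n i)
              + (Real.log (Z (n+1)) - Real.log (Z n)) * p n i) :=
            Finset.sum_congr rfl fun i _ => h1 i
        _ = (β * lam (n+1) - β * lam n) * E n
              + (Real.log (Z (n+1)) - Real.log (Z n)) * 1 := by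
            rw [Finset.sum_add_distrib, ← Finset.mul_sum, ← Finset.mul_sum, hps n, hEdef]
        _ = (S (n+1) - S n) + β * lam (n+1) * (E n - E (n+1)) := by
            rw [hSval n, hSval (n+1)]
            ring
    have key : ∀ n ∈ Finset.range N,
        (E (n+1) - E n) - β⁻¹ * (S (n+1) - S n) + η * ΔEH n = -β⁻¹ * KL n := by
      intro n _
      rw [hEH n, hEdiff (n+1) n, hKLval n]
      linear_combination ((lam (n+1) - 1) * (E (n+1) - E n)) * hηγ
        + (-(lam (n+1)) * (E (n+1) - E n)) * hβinv
    have hmain : ΔFS + η * ∑ n ∈ Finset.range N, ΔEH n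
        = -β⁻¹ * ∑ n ∈ Finset.range N, KL n := by
      have h1 : ΔFS + η * ∑ n ∈ Finset.range N, ΔEH n
          = ∑ n ∈ Finset.range N,
              ((E (n+1) - E n) - β⁻¹ * (S (n+1) - S n) + η * ΔEH n) := by
        rw [Finset.sum_add_distrib, Finset.sum_sub_distrib, Finset.sum_range_sub E N,
          ← Finset.mul_sum, Finset.sum_range_sub S N, ← Finset.mul_sum,
          hFS, hEdiff N 0, hvN N, hvN 0]
      rw [h1, Finset.sum_congr rfl key, ← Finset.mul_sum]
    have hKLnn : ∀ n, 0 ≤ KL n := fun n =>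
      (CLaux.kl_nonneg_eq (p n) (p (n+1)) (fun i => hfpos n _) (fun i => hfpos (n+1) _)
        (hps n) (hps (n+1))).1
    have hsumnn : 0 ≤ ∑ n ∈ Finset.range N, KL n :=
      Finset.sum_nonneg fun n _ => hKLnn n
    have hmain' : ΔFS + η * ∑ n ∈ Finset.range N, ΔEH n
        = -β⁻¹ * ∑ n ∈ Finset.range N, KL n := hmain
    refine ⟨by rw [hmain, Finset.sum_congr rfl fun n _ => (hKL n).symm], ?_, ?_⟩
    · rw [hmain]
      have hβi : 0 ≤ β⁻¹ := inv_nonneg.mpr hβ0.le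
      nlinarith
    · rw [hmain]
      constructor
      · intro h0
        have hsum0 : ∑ n ∈ Finset.range N, KL n = 0 := by
          rcases mul_eq_zero.mp h0 with h | h
          · exact absurd h (by simp [inv_ne_zero hβ0.ne'])
          · exact h
        intro n hn
        have hKL0 : KL n = 0 :=
          (Finset.sum_eq_zero_iff_of_nonneg (fun m _ => hKLnn m)).mp hsum0 n
            (Finset.mem_range.mpr hn)
        have hpq := ((CLaux.kl_nonneg_eq (p n) (p (n+1)) (fun i => hfpos n _)
          (fun i => hfpos (n+1) _) (hps n) (hps (n+1))).2).mp hKL0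
        rw [hτf (n+1), hτf n]
        exact CLaux.cfc_congr' hHS (fun i => (hpq i).symm)
      · intro h
        have hz : ∀ n ∈ Finset.range N, KL n = 0 := by
          intro n hn
          rw [← hKL n, h n (Finset.mem_range.mp hn)]
          unfold relEnt
          rw [sub_self, Matrix.mul_zero, Matrix.trace_zero]
          simp
        rw [Finset.sum_eq_zero hz, mul_zero]
end
end
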